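/- Let R be an F-finite Noetherian domain of prime characteristic p. Then R is strongly F-regular if and only if the only nonzero uniformly F-compatible ideal of R is R itself (equivalently, the test ideal of R, the smallest nonzero uniformly F-compatible ideal, is the unit ideal). -/
import Mathlib


/-- A domain `R` of characteristic `p` is strongly F-regular if for every nonzero `f ∈ R`
there are `e ≥ 1` and a `p^{-e}`-linear map `φ : R → R` (i.e. an additive map with
`φ (r^{p^e} * x) = r * φ x`) such that `φ f = 1`. -/
def StronglyFRegular (p : ℕ) (R : Type*) [CommRing R] : Prop :=
  ∀ f : R, f ≠ 0 → ∃ e : ℕ, 1 ≤ e ∧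
    ∃ φ : R →+ R, (∀ r x : R, φ (r ^ p ^ e * x) = r * φ x) ∧ φ f = 1

/-- An ideal `J` of a ring `R` of characteristic `p` is uniformly F-compatible if
`φ J ⊆ J` for every `e ≥ 1` and every `p^{-e}`-linear map `φ` on `R`. -/
def UniformlyFCompatible (p : ℕ) {R : Type*} [CommRing R] (J : Ideal R) : Prop :=
  ∀ e : ℕ, 1 ≤ e → ∀ φ : R →+ R, (∀ r x : R, φ (r ^ p ^ e * x) = r * φ x) →
    ∀ x ∈ J, φ x ∈ J

/-- Auxiliary: `p^{-e}`-linearity of an additive map. -/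
def IsPeLin (p e : ℕ) {R : Type*} [CommRing R] (φ : R →+ R) : Prop :=
  ∀ r x : R, φ (r ^ p ^ e * x) = r * φ x

section AuxLemmas

variable {p : ℕ} {R : Type*} [CommRing R]

lemma IsPeLin.comp {e e' : ℕ} {φ ψ : R →+ R} (hφ : IsPeLin p e φ) (hψ : IsPeLin p e' ψ) :
    IsPeLin p (e + e') (φ.comp ψ) := by
  intro r x
  have hψ' : ∀ r x : R, ψ (r ^ p ^ e' * x) = r * ψ x := hψ
  have hφ' : ∀ r x : R, φ (r ^ p ^ e * x) = r * φ x := hφ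
  have h : r ^ p ^ (e + e') = (r ^ p ^ e) ^ p ^ e' := by
    rw [← pow_mul, ← pow_add]
  simp only [AddMonoidHom.comp_apply, h, hψ', hφ']

lemma IsPeLin.mulLeftComp {e : ℕ} {φ : R →+ R} (hφ : IsPeLin p e φ) (c : R) :
    IsPeLin p e (φ.comp (AddMonoidHom.mulLeft c)) := by
  intro r x
  have hφ' : ∀ r x : R, φ (r ^ p ^ e * x) = r * φ x := hφ
  simp only [AddMonoidHom.comp_apply, AddMonoidHom.coe_mulLeft]
  rw [show c * (r ^ p ^ e * x) = r ^ p ^ e * (c * x) by ring, hφ']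

lemma IsPeLin.compMulLeft {e : ℕ} {φ : R →+ R} (hφ : IsPeLin p e φ) (c : R) :
    IsPeLin p e ((AddMonoidHom.mulLeft c).comp φ) := by
  intro r x
  have hφ' : ∀ r x : R, φ (r ^ p ^ e * x) = r * φ x := hφ
  simp only [AddMonoidHom.comp_apply, AddMonoidHom.coe_mulLeft, hφ']
  ring

/-- The ideal generated by all values `ψ g` of `p^{-e}`-linear maps (for all `e ≥ 1`)
is uniformly F-compatible. -/
lemma compat_span (p : ℕ) {R : Type*} [CommRing R] (g : R) :
    UniformlyFCompatible p
      (Ideal.span {y : R | ∃ e, 1 ≤ e ∧ ∃ ψ : R →+ R, IsPeLin p e ψ ∧ ψ g = y}) := by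
  intro e he φ hφ x hx
  have hφ' : IsPeLin p e φ := hφ
  have key : ∀ c : R, φ (c * x) ∈
      Ideal.span {y : R | ∃ e, 1 ≤ e ∧ ∃ ψ : R →+ R, IsPeLin p e ψ ∧ ψ g = y} := by
    induction hx using Submodule.span_induction with
    | mem y hy =>
      intro c
      obtain ⟨e', he', ψ, hψ, rfl⟩ := hy
      exact Ideal.subset_span ⟨e + e', le_trans he (Nat.le_add_right _ _),
        (φ.comp (AddMonoidHom.mulLeft c)).comp ψ, (hφ'.mulLeftComp c).comp hψ, rfl⟩
    | zero =>
      intro c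
      rw [mul_zero, map_zero]
      exact Ideal.zero_mem _
    | add x y hx hy ihx ihy =>
      intro c
      rw [mul_add, map_add]
      exact Ideal.add_mem _ (ihx c) (ihy c)
    | smul r x hx ih =>
      intro c
      rw [smul_eq_mul, ← mul_assoc]
      exact ih (c * r)
  have h1 := key 1
  rwa [one_mul] at h1

/-- Lowering the level of a `p^{-e}`-linear map to level `1` by precomposing with the
iterated Frobenius. -/
lemma lower_to_one [Fact p.Prime] [CharP R p] {e : ℕ} (he : 1 ≤ e) {φ : R →+ R}
    (hφ : IsPeLin p e φ) :
    ∃ γ : R →+ R, IsPeLin p 1 γ ∧ ∀ x, γ x = φ (x ^ p ^ (e - 1)) := by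
  haveI : ExpChar R p := ExpChar.prime Fact.out
  refine ⟨φ.comp (iterateFrobenius R p (e - 1)).toAddMonoidHom, ?_, fun x => ?_⟩
  · intro r x
    have h1 : ((r ^ p ^ 1 * x) ^ p ^ (e - 1) : R) = r ^ p ^ e * x ^ p ^ (e - 1) := by
      rw [mul_pow, ← pow_mul, ← pow_add, show 1 + (e - 1) = e by omega]
    show φ ((iterateFrobenius R p (e - 1)) (r ^ p ^ 1 * x)) = r * φ ((iterateFrobenius R p (e - 1)) x)
    rw [iterateFrobenius_def, iterateFrobenius_def, h1, hφ]
  · show φ ((iterateFrobenius R p (e - 1)) x) = _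
    rw [iterateFrobenius_def]

end AuxLemmas

/-- Frobenius-twisted copy of a field `K`: `K` viewed as a module over itself via
`a • x = a^p * x`. -/
def FrobTwist (p : ℕ) (K : Type*) : Type _ := K

/-- The identity map `K → FrobTwist p K`. -/
def FrobTwist.mk (p : ℕ) {K : Type*} (x : K) : FrobTwist p K := x

instance (p : ℕ) (K : Type*) [Field K] : AddCommGroup (FrobTwist p K) :=
  inferInstanceAs (AddCommGroup K)

noncomputable instance (p : ℕ) (K : Type*) [Field K] [ExpChar K p] :
    Module K (FrobTwist p K) :=
  Module.compHom K (frobenius K p)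

lemma FrobTwist.smul_mk (p : ℕ) {K : Type*} [Field K] [ExpChar K p] (r x : K) :
    r • FrobTwist.mk p x = FrobTwist.mk p (r ^ p * x) := by
  show frobenius K p r * x = r ^ p * x
  rw [frobenius_def]

/-- On a field of characteristic `p`, every nonzero element admits a `p^{-1}`-linear map
sending it to `1`. -/
lemma field_aux (p : ℕ) [Fact p.Prime] (K : Type*) [Field K] [CharP K p]
    (f : K) (hf : f ≠ 0) :
    ∃ φ : K →+ K, (∀ r x : K, φ (r ^ p * x) = r * φ x) ∧ φ f = 1 := by
  haveI : ExpChar K p := ExpChar.prime Fact.out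
  have hf' : FrobTwist.mk p f ≠ (0 : FrobTwist p K) := hf
  have h : ∃ l0 : Module.Dual K (FrobTwist p K), l0 (FrobTwist.mk p f) ≠ 0 := by
    by_contra hc
    push_neg at hc
    exact hf' ((Module.forall_dual_apply_eq_zero_iff K (FrobTwist.mk p f)).mp hc)
  obtain ⟨l0, hl0⟩ := h
  set lam : Module.Dual K (FrobTwist p K) := (l0 (FrobTwist.mk p f))⁻¹ • l0 with hlam
  have hlamf : lam (FrobTwist.mk p f) = 1 := by
    simp only [hlam, LinearMap.smul_apply, smul_eq_mul]
    exact inv_mul_cancel₀ hl0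
  refine ⟨{ toFun := fun x => lam (FrobTwist.mk p x),
            map_zero' := lam.map_zero,
            map_add' := fun a b => lam.map_add (FrobTwist.mk p a) (FrobTwist.mk p b) },
          fun r x => ?_, hlamf⟩
  show lam (FrobTwist.mk p (r ^ p * x)) = r * lam (FrobTwist.mk p x)
  rw [← FrobTwist.smul_mk p r x, lam.map_smul, smul_eq_mul]

/-- An F-finite Noetherian domain of prime characteristic `p` is strongly F-regular if and
only if the only nonzero uniformly F-compatible ideal of `R` is the unit ideal (i.e. the
test ideal is trivial). -/
theorem stronglyFRegular_iff_no_proper_uniformlyFCompatible (p : ℕ) [Fact p.Prime]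
    (R : Type*) [CommRing R] [IsDomain R] [IsNoetherianRing R] [CharP R p]
    (hFfinite : (frobenius R p).Finite) :
    StronglyFRegular p R ↔
      ∀ J : Ideal R, UniformlyFCompatible p J → J ≠ ⊥ → J = ⊤ := by
  constructor
  · -- easy direction
    intro hSFR J hJ hbot
    obtain ⟨f, hfJ, hf⟩ := (Submodule.ne_bot_iff J).mp hbot
    obtain ⟨e, he, φ, hφ, hφf⟩ := hSFR f hf
    have h1 : (1 : R) ∈ J := by
      rw [← hφf]
      exact hJ e he φ hφ f hfJ
    exact (Ideal.eq_top_iff_one J).mpr h1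
  · intro H f hf
    by_cases hdeg : ∀ e : ℕ, 1 ≤ e → ∀ φ : R →+ R,
        (∀ r x : R, φ (r ^ p ^ e * x) = r * φ x) → ∀ x, φ x = 0
    · -- degenerate case: all maps vanish, hence every ideal is compatible and R is a field
      have hfield : IsField R := by
        refine ⟨exists_pair_ne R, mul_comm, fun {a} ha => ?_⟩
        have hcomp : UniformlyFCompatible p (Ideal.span {a}) := by
          intro e he φ hφ x hx
          rw [hdeg e he φ hφ x]
          exact Ideal.zero_mem _
        have htop : Ideal.span {a} = ⊤ :=
          H _ hcomp (by rwa [Ne, Ideal.span_singleton_eq_bot])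
        exact isUnit_iff_exists_inv.mp (Ideal.span_singleton_eq_top.mp htop)
      letI := hfield.toField
      obtain ⟨φ, hφ, hφf⟩ := field_aux p R f hf
      exact ⟨1, le_refl 1, φ, by simpa [pow_one] using hφ, hφf⟩
    · push_neg at hdeg
      obtain ⟨e₀, he₀, ψ₀, hψ₀, x₀, hx₀⟩ := hdeg
      have hψ₀' : IsPeLin p e₀ ψ₀ := hψ₀
      -- Step 1: obtain a level-1 Frobenius splitting β
      have hS1top : Ideal.span {y : R | ∃ e, 1 ≤ e ∧ ∃ ψ : R →+ R, IsPeLin p e ψ ∧ ψ 1 = y} = ⊤ := by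
        refine H _ (compat_span p 1) ((Submodule.ne_bot_iff _).mpr ⟨ψ₀ x₀, ?_, hx₀⟩)
        refine Ideal.subset_span ⟨e₀, he₀, ψ₀.comp (AddMonoidHom.mulLeft x₀),
          hψ₀'.mulLeftComp x₀, ?_⟩
        show ψ₀ (x₀ * 1) = ψ₀ x₀
        rw [mul_one]
      have h1mem : (1 : R) ∈
          Ideal.span {y : R | ∃ e, 1 ≤ e ∧ ∃ ψ : R →+ R, IsPeLin p e ψ ∧ ψ 1 = y} := by
        rw [hS1top]; exact Submodule.mem_top
      have hβ : ∃ β : R →+ R, IsPeLin p 1 β ∧ β 1 = 1 := by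
        have key : ∀ x : R, x ∈
            Ideal.span {y : R | ∃ e, 1 ≤ e ∧ ∃ ψ : R →+ R, IsPeLin p e ψ ∧ ψ 1 = y} →
            ∃ γ : R →+ R, IsPeLin p 1 γ ∧ γ 1 = x := by
          intro x hx
          induction hx using Submodule.span_induction with
          | mem y hy =>
            obtain ⟨e, he, ψ, hψ, rfl⟩ := hy
            obtain ⟨γ, hγ, hγval⟩ := lower_to_one he hψ
            exact ⟨γ, hγ, by rw [hγval, one_pow]⟩
          | zero =>
            exact ⟨0, fun r x => by simp, by simp⟩
          | add x y hx hy ihx ihy =>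
            obtain ⟨γ₁, h₁, v₁⟩ := ihx
            obtain ⟨γ₂, h₂, v₂⟩ := ihy
            refine ⟨γ₁ + γ₂, fun r x => ?_, by simp [v₁, v₂]⟩
            have e₁ : ∀ r x : R, γ₁ (r ^ p ^ 1 * x) = r * γ₁ x := h₁
            have e₂ : ∀ r x : R, γ₂ (r ^ p ^ 1 * x) = r * γ₂ x := h₂
            simp only [AddMonoidHom.add_apply, e₁, e₂, mul_add]
          | smul r x hx ih =>
            obtain ⟨γ, hγ, v⟩ := ih
            refine ⟨(AddMonoidHom.mulLeft r).comp γ, hγ.compMulLeft r, ?_⟩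
            show r * γ 1 = r • x
            rw [v, smul_eq_mul]
        exact key 1 h1mem
      obtain ⟨β, hβ1, hβval⟩ := hβ
      -- Step 2: the "fixer" δ, a level-1 map with δ f = f
      have hp1 : p - 1 + 1 = p := Nat.succ_pred_eq_of_pos (Fact.out : p.Prime).pos
      set δ : R →+ R := β.comp (AddMonoidHom.mulLeft (f ^ (p - 1))) with hδdef
      have hδ : IsPeLin p 1 δ := hβ1.mulLeftComp _
      have hδf : δ f = f := by
        have hpow : f ^ (p - 1) * f = f ^ p ^ 1 * 1 := by
          rw [mul_one, pow_one, ← pow_succ, hp1]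
        show β (f ^ (p - 1) * f) = f
        rw [hpow, hβ1 f 1, hβval, mul_one]
      -- Step 3: iterated fixers of any level
      have hδk : ∀ k : ℕ, ∃ d : R →+ R, IsPeLin p k d ∧ d f = f := by
        intro k
        induction k with
        | zero =>
          exact ⟨AddMonoidHom.id R, fun r x => by simp, rfl⟩
        | succ n ih =>
          obtain ⟨d, hd, hdf⟩ := ih
          refine ⟨d.comp δ, hd.comp hδ, ?_⟩
          show d (δ f) = f
          rw [hδf, hdf]
      -- boosting maps to higher level, preserving the value at f
      have boost : ∀ (E E' : ℕ) (Φ : R →+ R), E ≤ E' → IsPeLin p E Φ →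
          ∃ Φ' : R →+ R, IsPeLin p E' Φ' ∧ Φ' f = Φ f := by
        intro E E' Φ hle hΦ
        obtain ⟨d, hd, hdf⟩ := hδk (E' - E)
        refine ⟨Φ.comp d, ?_, ?_⟩
        · have h := hΦ.comp hd
          rwa [Nat.add_sub_cancel' hle] at h
        · show Φ (d f) = Φ f
          rw [hdf]
      -- Step 4: the ideal generated by values at f is the unit ideal
      have hSftop : Ideal.span {y : R | ∃ e, 1 ≤ e ∧ ∃ ψ : R →+ R, IsPeLin p e ψ ∧ ψ f = y} = ⊤ :=
        H _ (compat_span p f) ((Submodule.ne_bot_iff _).mpr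
          ⟨f, Ideal.subset_span ⟨1, le_refl 1, δ, hδ, hδf⟩, hf⟩)
      have h1f : (1 : R) ∈
          Ideal.span {y : R | ∃ e, 1 ≤ e ∧ ∃ ψ : R →+ R, IsPeLin p e ψ ∧ ψ f = y} := by
        rw [hSftop]; exact Submodule.mem_top
      -- extract a single map sending f to 1
      have key : ∀ x : R, x ∈
          Ideal.span {y : R | ∃ e, 1 ≤ e ∧ ∃ ψ : R →+ R, IsPeLin p e ψ ∧ ψ f = y} →
          ∃ E, 1 ≤ E ∧ ∃ Φ : R →+ R, IsPeLin p E Φ ∧ Φ f = x := by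
        intro x hx
        induction hx using Submodule.span_induction with
        | mem y hy => exact hy
        | zero =>
          exact ⟨1, le_refl 1, 0, fun r x => by simp, by simp⟩
        | add x y hx hy ihx ihy =>
          obtain ⟨E₁, hE₁, Φ₁, h₁, v₁⟩ := ihx
          obtain ⟨E₂, hE₂, Φ₂, h₂, v₂⟩ := ihy
          obtain ⟨Φ₁', h₁', v₁'⟩ := boost E₁ (max E₁ E₂) Φ₁ (le_max_left _ _) h₁
          obtain ⟨Φ₂', h₂', v₂'⟩ := boost E₂ (max E₁ E₂) Φ₂ (le_max_right _ _) h₂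
          refine ⟨max E₁ E₂, le_trans hE₁ (le_max_left _ _), Φ₁' + Φ₂', fun r x => ?_, ?_⟩
          · have e₁ : ∀ r x : R, Φ₁' (r ^ p ^ max E₁ E₂ * x) = r * Φ₁' x := h₁'
            have e₂ : ∀ r x : R, Φ₂' (r ^ p ^ max E₁ E₂ * x) = r * Φ₂' x := h₂'
            simp only [AddMonoidHom.add_apply, e₁, e₂, mul_add]
          · simp [v₁', v₂', v₁, v₂]
        | smul r x hx ih =>
          obtain ⟨E, hE, Φ, hΦ, v⟩ := ih
          refine ⟨E, hE, (AddMonoidHom.mulLeft r).comp Φ, hΦ.compMulLeft r, ?_⟩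
          show r * Φ f = r • x
          rw [v, smul_eq_mul]
      obtain ⟨E, hE, Φ, hΦ, v⟩ := key 1 h1f
      exact ⟨E, hE, Φ, hΦ, v⟩
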